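/- With the notation of the two-variable orthogonal polynomials v_{n,m} built from Jacobi polynomials, each v_{n,m} is an eigenfunction of the differential operator (2/κ)·𝓛 with eigenvalue λ_{n+m} = -(n+m)(n+m+α₀+β+1), where 𝓛 = (κ/2)(y-x²)∂²_x + κx(1-y)∂_x∂_y + (κ/2)y(1-y)∂²_y - [(ρ₊+ρ₋+ρ₀+6)x + (ρ₊-ρ₋)]∂_x - [(ρ₊+ρ₋+ρ₀+6)y - (ρ₊+ρ₋+4)]∂_y, with α₀ = (2/κ)(ρ₀+2)-1, α_± = (2/κ)(ρ_±+2)-1, β = α₊+α₋+1. -/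

import Mathlib

/-!
Write `v_{n,m}(x, y) = p(y) q(x, y)` with `p(y) = P_m^{(α₀, β+2n)}(2y - 1)` and `q = Q_n^{(α₊,α₋)}`.
On such a product `(2/κ)𝓛` splits into `p` times a second-order operator applied to `q`, plus `q`
times the Jacobi operator in `y` applied to `p`, plus the mixed term `2(1 - y) p' (x q_x + y q_y)`.
Since `q` is homogeneous of degree `n`, Euler's relation turns the mixed term into
`2n(1 - y) p'`, which shifts the second Jacobi parameter of `p` from `β` to `β + 2n`; this is the
conjugation identity of the `(r, h)` coordinates. Instead of changing variables, the two remaining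
equations (the Jacobi equation for `p` and its homogeneous counterpart for `q`) are verified on the
expansions in powers of `y - 1` and of `(x - y)/2`, where each reduces to the two-term recurrence
of the Jacobi coefficients and telescopes.
-/

open Filter Set Finset

noncomputable section

/-- The Jacobi polynomial `P_n^{(α,β)}(x)`, defined by its standard explicit formula
`P_n^{(α,β)}(x) = (Γ(α+n+1)/(n! Γ(α+β+n+1))) ∑_{m=0}^n C(n,m) (Γ(α+β+n+m+1)/Γ(α+m+1)) ((x-1)/2)^m`. -/
def jacobiP (α β : ℝ) (n : ℕ) (x : ℝ) : ℝ :=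
  Real.Gamma (α + (n : ℝ) + 1) / ((n.factorial : ℝ) * Real.Gamma (α + β + (n : ℝ) + 1)) *
    ∑ m ∈ Finset.range (n + 1),
      (n.choose m : ℝ) * (Real.Gamma (α + β + (n : ℝ) + (m : ℝ) + 1) /
        Real.Gamma (α + (m : ℝ) + 1)) * ((x - 1) / 2) ^ m
/-- The homogeneous degree-`n` polynomial `Q_n^{(α,β)}(x,y)` with
`Q_n^{(α,β)}(x,y) = yⁿ P_n^{(α,β)}(x/y)` for `y ≠ 0`. -/
def QJ (α β : ℝ) (n : ℕ) (x y : ℝ) : ℝ :=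
  Real.Gamma (α + (n : ℝ) + 1) / ((n.factorial : ℝ) * Real.Gamma (α + β + (n : ℝ) + 1)) *
    ∑ m ∈ Finset.range (n + 1),
      (n.choose m : ℝ) * (Real.Gamma (α + β + (n : ℝ) + (m : ℝ) + 1) /
        Real.Gamma (α + (m : ℝ) + 1)) * ((x - y) / 2) ^ m * y ^ (n - m)

/-- The two-variable polynomial `v_{n,m}(x,y) = P_m^{(α₀, β+2n)}(2y-1) · Q_n^{(α₊,α₋)}(x,y)`. -/
def vnm (ap am a0 β : ℝ) (n m : ℕ) (p : ℝ × ℝ) : ℝ :=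
  jacobiP a0 (β + 2 * (n : ℝ)) m (2 * p.2 - 1) * QJ ap am n p.1 p.2

/-- The weight `Ψ(x,y) = 1_Δ(x,y) (y-x)^{α₊} (y+x)^{α₋} (1-y)^{α₀}` on the triangle
`Δ = {(x,y) : 0 < |x| < y < 1}`. -/
def wtPsi (ap am a0 : ℝ) (p : ℝ × ℝ) : ℝ :=
  if 0 < |p.1| ∧ |p.1| < p.2 ∧ p.2 < 1 then
    (p.2 - p.1) ^ ap * (p.2 + p.1) ^ am * (1 - p.2) ^ a0
  else 0

/-- First-coordinate partial derivative. -/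
def pdx (f : ℝ × ℝ → ℝ) (p : ℝ × ℝ) : ℝ := deriv (fun x => f (x, p.2)) p.1

/-- Second-coordinate partial derivative. -/
def pdy (f : ℝ × ℝ → ℝ) (p : ℝ × ℝ) : ℝ := deriv (fun y => f (p.1, y)) p.2

/-- The generator `𝓛` of the two-dimensional diffusion `(X, Y)`. -/
def Lop (κ r0 rp rm : ℝ) (f : ℝ × ℝ → ℝ) (p : ℝ × ℝ) : ℝ :=
  κ / 2 * (p.2 - p.1 ^ 2) * pdx (pdx f) p + κ * p.1 * (1 - p.2) * pdy (pdx f) p +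
    κ / 2 * p.2 * (1 - p.2) * pdy (pdy f) p -
    ((rp + rm + r0 + 6) * p.1 + (rp - rm)) * pdx f p -
    ((rp + rm + r0 + 6) * p.2 - (rp + rm + 4)) * pdy f p

namespace JacobiEigen

def jacobiCoeff (a b : ℝ) (N j : ℕ) : ℝ :=
  (N.choose j : ℝ) * (Real.Gamma (a + b + N + j + 1) / Real.Gamma (a + j + 1))

def jacobiNorm (a b : ℝ) (N : ℕ) : ℝ :=
  Real.Gamma (a + N + 1) / ((N.factorial : ℝ) * Real.Gamma (a + b + N + 1))

/-- The two-term recurrence of the coefficients of `P_N^{(a,b)}` in powers of `(x - 1) / 2`. -/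
def JacobiRecurrence (a b : ℝ) (N : ℕ) (c : ℕ → ℝ) : Prop :=
  ∀ j < N, c (j + 1) * ((j + 1) * (j + 1 + a)) = c j * ((N - j) * (a + b + N + j + 1))

theorem jacobiRecurrence_jacobiCoeff {a b : ℝ} (ha : -1 < a) (hb : -1 < b) (N : ℕ) :
    JacobiRecurrence a b N (jacobiCoeff a b N) := by
  intro j hj
  have hj0 : (0 : ℝ) ≤ j := j.cast_nonneg
  have hN : (1 : ℝ) ≤ N := by exact_mod_cast (show 1 ≤ N by omega)
  have ha' : a + j + 1 ≠ 0 := by linarith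
  have hab : a + b + N + j + 1 ≠ 0 := by linarith
  have hΓa : Real.Gamma (a + j + 1) ≠ 0 := (Real.Gamma_pos_of_pos (by linarith)).ne'
  have hchoose : (N.choose (j + 1) : ℝ) * (j + 1) = N.choose j * (N - j) := by
    rw [← Nat.cast_sub hj.le]; exact_mod_cast Nat.choose_succ_right_eq N j
  simp only [jacobiCoeff, Nat.cast_add, Nat.cast_one, ← add_assoc, Real.Gamma_add_one hab,
    Real.Gamma_add_one ha']
  field_simp
  linear_combination (a + j + 1) * Real.Gamma (a + b + N + j + 1) * hchoose

theorem JacobiRecurrence.sum_eq_zero {a b : ℝ} {N : ℕ} {c : ℕ → ℝ}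
    (hc : JacobiRecurrence a b N c) (Z : ℕ → ℝ) :
    ∑ j ∈ range (N + 1),
      c j * ((N - j) * (N + j + a + b + 1) * Z (j + 1) - j * (j + a) * Z j) = 0 := by
  set g : ℕ → ℝ := fun j => c j * (j * (j + a)) * Z j
  have hstep : ∀ j ∈ range N,
      c j * ((N - j) * (N + j + a + b + 1) * Z (j + 1) - j * (j + a) * Z j) = g (j + 1) - g j := by
    intro j hj
    simp only [g]
    push_cast
    linear_combination (-Z (j + 1)) * hc j (mem_range.1 hj)
  rw [sum_range_succ, sum_congr rfl hstep, sum_range_sub]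
  simp only [g]
  ring

def shiftedPowSum (c : ℕ → ℝ) (M : ℕ) (y : ℝ) : ℝ :=
  ∑ k ∈ range (M + 1), c k * (y - 1) ^ k

def shiftedPowSumD (c : ℕ → ℝ) (M : ℕ) (y : ℝ) : ℝ :=
  ∑ k ∈ range (M + 1), c k * (k * (y - 1) ^ (k - 1))

def shiftedPowSumDD (c : ℕ → ℝ) (M : ℕ) (y : ℝ) : ℝ :=
  ∑ k ∈ range (M + 1), c k * (k * ((k - 1 : ℕ) * (y - 1) ^ (k - 1 - 1)))

theorem hasDerivAt_shiftedPowSum (c : ℕ → ℝ) (M : ℕ) (y : ℝ) :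
    HasDerivAt (shiftedPowSum c M) (shiftedPowSumD c M y) y := by
  unfold shiftedPowSum shiftedPowSumD
  refine HasDerivAt.fun_sum fun k _ => ?_
  simpa using (((hasDerivAt_id y).sub_const 1).fun_pow k).const_mul (c k)

theorem hasDerivAt_shiftedPowSumD (c : ℕ → ℝ) (M : ℕ) (y : ℝ) :
    HasDerivAt (shiftedPowSumD c M) (shiftedPowSumDD c M y) y := by
  unfold shiftedPowSumD shiftedPowSumDD
  refine HasDerivAt.fun_sum fun k _ => ?_
  simpa using ((((hasDerivAt_id y).sub_const 1).fun_pow (k - 1)).const_mul (k : ℝ)).const_mul (c k)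

theorem JacobiRecurrence.shiftedPowSum_ode {a b : ℝ} {M : ℕ} {c : ℕ → ℝ}
    (hc : JacobiRecurrence a b M c) (y : ℝ) :
    y * (1 - y) * shiftedPowSumDD c M y + (b + 1 - (a + b + 2) * y) * shiftedPowSumD c M y
      + M * (M + a + b + 1) * shiftedPowSum c M y = 0 := by
  rw [← hc.sum_eq_zero fun k => (y - 1) ^ (k - 1)]
  simp only [shiftedPowSum, shiftedPowSumD, shiftedPowSumDD, mul_sum, ← sum_add_distrib]
  refine sum_congr rfl fun k _ => ?_
  rcases k with _ | _ | k <;> push_cast <;> ring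

def halfDiffMono (j k : ℕ) (x y : ℝ) : ℝ := ((x - y) / 2) ^ j * y ^ k

theorem hasDerivAt_halfDiffMono_fst (j k : ℕ) (x y : ℝ) :
    HasDerivAt (halfDiffMono j k · y) (j / 2 * halfDiffMono (j - 1) k x y) x := by
  unfold halfDiffMono
  have h := ((((hasDerivAt_id x).sub_const y).div_const 2).fun_pow j).mul_const (y ^ k)
  exact h.congr_deriv (by simp; ring)

theorem hasDerivAt_halfDiffMono_snd (j k : ℕ) (x y : ℝ) :
    HasDerivAt (halfDiffMono j k x ·)
      (k * halfDiffMono j (k - 1) x y - j / 2 * halfDiffMono (j - 1) k x y) y := by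
  unfold halfDiffMono
  have h := ((((hasDerivAt_id y).const_sub x).div_const 2).fun_pow j).fun_mul (hasDerivAt_pow k y)
  exact h.congr_deriv (by simp; ring)

/-- `∑ d_j ((x - y) / 2)^j y^(N - j)`, which is `Q_N^{(a,b)}(x, y)` up to normalisation when
`d = jacobiCoeff a b N`. -/
def homSum (d : ℕ → ℝ) (N : ℕ) (x y : ℝ) : ℝ :=
  ∑ j ∈ range (N + 1), d j * halfDiffMono j (N - j) x y

def homSumDx (d : ℕ → ℝ) (N : ℕ) (x y : ℝ) : ℝ :=
  ∑ j ∈ range (N + 1), d j * (j / 2 * halfDiffMono (j - 1) (N - j) x y)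

def homSumDy (d : ℕ → ℝ) (N : ℕ) (x y : ℝ) : ℝ :=
  ∑ j ∈ range (N + 1), d j *
    ((N - j : ℕ) * halfDiffMono j (N - j - 1) x y - j / 2 * halfDiffMono (j - 1) (N - j) x y)

def homSumDxx (d : ℕ → ℝ) (N : ℕ) (x y : ℝ) : ℝ :=
  ∑ j ∈ range (N + 1), d j * (j / 2 * ((j - 1 : ℕ) / 2 * halfDiffMono (j - 1 - 1) (N - j) x y))

def homSumDxy (d : ℕ → ℝ) (N : ℕ) (x y : ℝ) : ℝ :=
  ∑ j ∈ range (N + 1), d j * (j / 2 *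
    ((N - j : ℕ) * halfDiffMono (j - 1) (N - j - 1) x y
      - (j - 1 : ℕ) / 2 * halfDiffMono (j - 1 - 1) (N - j) x y))

def homSumDyy (d : ℕ → ℝ) (N : ℕ) (x y : ℝ) : ℝ :=
  ∑ j ∈ range (N + 1), d j *
    ((N - j : ℕ) * ((N - j - 1 : ℕ) * halfDiffMono j (N - j - 1 - 1) x y
        - j / 2 * halfDiffMono (j - 1) (N - j - 1) x y)
      - j / 2 * ((N - j : ℕ) * halfDiffMono (j - 1) (N - j - 1) x y
        - (j - 1 : ℕ) / 2 * halfDiffMono (j - 1 - 1) (N - j) x y))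

section homSumDerivatives

variable (d : ℕ → ℝ) (N : ℕ) (x y : ℝ)

theorem hasDerivAt_homSum_fst : HasDerivAt (homSum d N · y) (homSumDx d N x y) x :=
  HasDerivAt.fun_sum fun j _ => (hasDerivAt_halfDiffMono_fst j (N - j) x y).const_mul (d j)

theorem hasDerivAt_homSum_snd : HasDerivAt (homSum d N x ·) (homSumDy d N x y) y :=
  HasDerivAt.fun_sum fun j _ => (hasDerivAt_halfDiffMono_snd j (N - j) x y).const_mul (d j)

theorem hasDerivAt_homSumDx_fst : HasDerivAt (homSumDx d N · y) (homSumDxx d N x y) x :=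
  HasDerivAt.fun_sum fun j _ =>
    ((hasDerivAt_halfDiffMono_fst (j - 1) (N - j) x y).const_mul (j / 2 : ℝ)).const_mul (d j)

theorem hasDerivAt_homSumDx_snd : HasDerivAt (homSumDx d N x ·) (homSumDxy d N x y) y :=
  HasDerivAt.fun_sum fun j _ =>
    ((hasDerivAt_halfDiffMono_snd (j - 1) (N - j) x y).const_mul (j / 2 : ℝ)).const_mul (d j)

theorem hasDerivAt_homSumDy_snd : HasDerivAt (homSumDy d N x ·) (homSumDyy d N x y) y :=
  HasDerivAt.fun_sum fun j _ =>
    ((((hasDerivAt_halfDiffMono_snd j (N - j - 1) x y).const_mul ((N - j : ℕ) : ℝ)).sub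
      ((hasDerivAt_halfDiffMono_snd (j - 1) (N - j) x y).const_mul (j / 2 : ℝ)))).const_mul (d j)

theorem homSum_euler : x * homSumDx d N x y + y * homSumDy d N x y = N * homSum d N x y := by
  simp only [homSum, homSumDx, homSumDy, mul_sum, ← sum_add_distrib]
  refine sum_congr rfl fun j hj => ?_
  obtain ⟨k, rfl⟩ : ∃ k, N = j + k := ⟨N - j, by grind⟩
  simp only [Nat.add_sub_cancel_left, halfDiffMono]
  rcases j with _ | j <;> rcases k with _ | k <;> push_cast <;> ring

end homSumDerivatives

/-- `s` is arbitrary: its terms cancel by Euler's relation `homSum_euler`. -/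
theorem JacobiRecurrence.homSum_pde {a b : ℝ} {N : ℕ} {d : ℕ → ℝ}
    (hd : JacobiRecurrence a b N d) (s x y : ℝ) :
    (y - x ^ 2) * homSumDxx d N x y + 2 * x * (1 - y) * homSumDxy d N x y
      + y * (1 - y) * homSumDyy d N x y - (s * x + (a - b)) * homSumDx d N x y
      - (s * y - (a + b + 2)) * homSumDy d N x y + N * (N + s - 1) * homSum d N x y = 0 := by
  rw [← hd.sum_eq_zero fun j => halfDiffMono (j - 1) (N - j) x y]
  simp only [homSum, homSumDx, homSumDy, homSumDxx, homSumDxy, homSumDyy, mul_sum,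
    ← sum_add_distrib, ← sum_sub_distrib]
  refine sum_congr rfl fun j hj => ?_
  obtain ⟨k, rfl⟩ : ∃ k, N = j + k := ⟨N - j, by grind⟩
  simp only [Nat.add_sub_cancel_left, Nat.add_sub_add_left, halfDiffMono]
  rcases j with _ | _ | j <;> rcases k with _ | _ | k <;> push_cast <;> ring

theorem pdx_eq_of_hasDerivAt {f g : ℝ × ℝ → ℝ}
    (h : ∀ x y, HasDerivAt (fun t => f (t, y)) (g (x, y)) x) : pdx f = g :=
  funext fun z => (h z.1 z.2).deriv

theorem pdy_eq_of_hasDerivAt {f g : ℝ × ℝ → ℝ}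
    (h : ∀ x y, HasDerivAt (fun s => f (x, s)) (g (x, y)) y) : pdy f = g :=
  funext fun z => (h z.1 z.2).deriv

theorem Lop_const_mul (κ r0 rp rm K : ℝ) (f : ℝ × ℝ → ℝ) (z : ℝ × ℝ) :
    Lop κ r0 rp rm (fun z => K * f z) z = K * Lop κ r0 rp rm f z := by
  have hx : ∀ g : ℝ × ℝ → ℝ, pdx (fun z => K * g z) = fun z => K * pdx g z :=
    fun g => funext fun z => congrFun (deriv_const_mul_field' K) z.1
  have hy : ∀ g : ℝ × ℝ → ℝ, pdy (fun z => K * g z) = fun z => K * pdy g z :=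
    fun g => funext fun z => congrFun (deriv_const_mul_field' K) z.2
  simp only [Lop, hx, hy]
  ring

theorem Lop_mul_apply {κ r0 rp rm : ℝ} {p p' p'' : ℝ → ℝ} {q qx qy qxx qxy qyy : ℝ → ℝ → ℝ}
    (hp : ∀ y, HasDerivAt p (p' y) y) (hp' : ∀ y, HasDerivAt p' (p'' y) y)
    (hq_fst : ∀ x y, HasDerivAt (q · y) (qx x y) x) (hq_snd : ∀ x y, HasDerivAt (q x ·) (qy x y) y)
    (hqx_fst : ∀ x y, HasDerivAt (qx · y) (qxx x y) x)
    (hqx_snd : ∀ x y, HasDerivAt (qx x ·) (qxy x y) y)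
    (hqy_snd : ∀ x y, HasDerivAt (qy x ·) (qyy x y) y) (x y : ℝ) :
    Lop κ r0 rp rm (fun z => p z.2 * q z.1 z.2) (x, y) =
      p y * (κ / 2 * (y - x ^ 2) * qxx x y + κ * x * (1 - y) * qxy x y
          + κ / 2 * y * (1 - y) * qyy x y - ((rp + rm + r0 + 6) * x + (rp - rm)) * qx x y
          - ((rp + rm + r0 + 6) * y - (rp + rm + 4)) * qy x y)
        + q x y * (κ / 2 * y * (1 - y) * p'' y - ((rp + rm + r0 + 6) * y - (rp + rm + 4)) * p' y)
        + κ * (1 - y) * p' y * (x * qx x y + y * qy x y) := by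
  have hx : pdx (fun z => p z.2 * q z.1 z.2) = fun z => p z.2 * qx z.1 z.2 :=
    pdx_eq_of_hasDerivAt fun x y => (hq_fst x y).const_mul (p y)
  have hy : pdy (fun z => p z.2 * q z.1 z.2) = fun z => p' z.2 * q z.1 z.2 + p z.2 * qy z.1 z.2 :=
    pdy_eq_of_hasDerivAt fun x y => (hp y).mul (hq_snd x y)
  have hxx : pdx (fun z => p z.2 * qx z.1 z.2) = fun z => p z.2 * qxx z.1 z.2 :=
    pdx_eq_of_hasDerivAt fun x y => (hqx_fst x y).const_mul (p y)
  have hxy : pdy (fun z => p z.2 * qx z.1 z.2) =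
      fun z => p' z.2 * qx z.1 z.2 + p z.2 * qxy z.1 z.2 :=
    pdy_eq_of_hasDerivAt fun x y => (hp y).mul (hqx_snd x y)
  have hyy : pdy (fun z => p' z.2 * q z.1 z.2 + p z.2 * qy z.1 z.2) =
      fun z => p'' z.2 * q z.1 z.2 + p' z.2 * qy z.1 z.2
        + (p' z.2 * qy z.1 z.2 + p z.2 * qyy z.1 z.2) :=
    pdy_eq_of_hasDerivAt fun x y => ((hp' y).mul (hq_snd x y)).add ((hp y).mul (hqy_snd x y))
  simp only [Lop, hx, hy, hxx, hxy, hyy]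
  ring

theorem Lop_shiftedPowSum_mul_homSum {κ a0 ap am : ℝ} {M N : ℕ} {c d : ℕ → ℝ}
    (hc : JacobiRecurrence a0 (ap + am + 1 + 2 * N) M c) (hd : JacobiRecurrence ap am N d)
    (x y : ℝ) :
    Lop κ (κ * (a0 + 1) / 2 - 2) (κ * (ap + 1) / 2 - 2) (κ * (am + 1) / 2 - 2)
        (fun z => shiftedPowSum c M z.2 * homSum d N z.1 z.2) (x, y) =
      κ / 2 * (-((N + M) * (N + M + a0 + (ap + am + 1) + 1))) *
        (shiftedPowSum c M y * homSum d N x y) := by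
  rw [Lop_mul_apply (hasDerivAt_shiftedPowSum c M) (hasDerivAt_shiftedPowSumD c M)
    (hasDerivAt_homSum_fst d N) (hasDerivAt_homSum_snd d N) (hasDerivAt_homSumDx_fst d N)
    (hasDerivAt_homSumDx_snd d N) (hasDerivAt_homSumDy_snd d N)]
  linear_combination (κ / 2 * shiftedPowSum c M y) * hd.homSum_pde (a0 + ap + am + 3) x y
    + (κ / 2 * homSum d N x y) * hc.shiftedPowSum_ode y
    + (κ * (1 - y) * shiftedPowSumD c M y) * homSum_euler d N x y

theorem jacobiP_two_mul_sub_one (a b : ℝ) (M : ℕ) (y : ℝ) :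
    jacobiP a b M (2 * y - 1) = jacobiNorm a b M * shiftedPowSum (jacobiCoeff a b M) M y := by
  simp only [jacobiP, jacobiNorm, shiftedPowSum, jacobiCoeff,
    show (2 * y - 1 - 1) / 2 = y - 1 by ring]

theorem QJ_eq_homSum (a b : ℝ) (N : ℕ) (x y : ℝ) :
    QJ a b N x y = jacobiNorm a b N * homSum (jacobiCoeff a b N) N x y := by
  simp only [QJ, jacobiNorm, homSum, jacobiCoeff, halfDiffMono, mul_assoc]

end JacobiEigen

open JacobiEigen in
/-- **The `v_{n,m}` are eigenfunctions of `(2/κ)𝓛`** with eigenvalue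
`λ_{n+m} = -(n+m)(n+m+α₀+β+1)`, i.e. `𝓛 v_{n,m} = (κ/2) λ_{n+m} v_{n,m}`. -/
theorem stmt_17 (κ r0 rp rm a0 ap am β : ℝ) (hκ : 0 < κ)
    (ha0 : a0 = 2 / κ * (r0 + 2) - 1) (hap : ap = 2 / κ * (rp + 2) - 1)
    (ham : am = 2 / κ * (rm + 2) - 1) (hβ : β = ap + am + 1)
    (h0 : -1 < a0) (hp : -1 < ap) (hm : -1 < am) (n m : ℕ) :
    ∀ p : ℝ × ℝ,
      Lop κ r0 rp rm (vnm ap am a0 β n m) p =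
        κ / 2 * (-(((n : ℝ) + (m : ℝ)) * ((n : ℝ) + (m : ℝ) + a0 + β + 1))) *
          vnm ap am a0 β n m p := by
  have hκ0 : κ ≠ 0 := hκ.ne'
  obtain rfl : r0 = κ * (a0 + 1) / 2 - 2 := by rw [ha0]; field_simp; ring
  obtain rfl : rp = κ * (ap + 1) / 2 - 2 := by rw [hap]; field_simp; ring
  obtain rfl : rm = κ * (am + 1) / 2 - 2 := by rw [ham]; field_simp; ring
  subst hβ
  have hb : -1 < ap + am + 1 + 2 * (n : ℝ) := by linarith [n.cast_nonneg (α := ℝ)]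
  have hv : vnm ap am a0 (ap + am + 1) n m = fun z =>
      jacobiNorm a0 (ap + am + 1 + 2 * n) m * jacobiNorm ap am n *
        (shiftedPowSum (jacobiCoeff a0 (ap + am + 1 + 2 * n) m) m z.2 *
          homSum (jacobiCoeff ap am n) n z.1 z.2) := by
    funext z
    rw [vnm, jacobiP_two_mul_sub_one, QJ_eq_homSum]
    ring
  rintro ⟨x, y⟩
  rw [hv, Lop_const_mul, Lop_shiftedPowSum_mul_homSum (jacobiRecurrence_jacobiCoeff h0 hb m)
    (jacobiRecurrence_jacobiCoeff hp hm n)]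
  ring
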